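/- Let R be a commutative ring, A and B R-algebras with an R-algebra morphism β : A → B, T an A-ring and S a B-ring with a morphism of A-rings ξ : S → T. Let K be a right T-module, L a right S-module, and θ : K → L a right A-linear map. If θ is injective and θ(k ↼ ξ(s)) = θ(k) ↼ s for every s ∈ S and k ∈ K, then ξ((0_L : θ(k))) ⊆ (0_K : k) for every k ∈ K, and consequently the induced right S-module K ⊗_A B is L-subgenerated. -/

import Mathlib

/-! Since `θ` is injective and intertwines `ξ`, an `s` killing `θ k` has `ξ s` killing `k`;
hence `(k ⊗ b) ↼ s = k ξ(s) ⊗ b` vanishes as soon as `s` kills the one-element set `{θ k}`.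
Elements with such a finite witness set form an additive submonoid, and the pure tensors
generate `K ⊗_A B` additively. -/

open MulOpposite

namespace NCT

variable (A : Type*) [Ring A]
variable (M : Type*) [AddCommGroup M] [Module Aᵐᵒᵖ M]
variable (N : Type*) [AddCommGroup N] [Module A N]

noncomputable def rel : AddSubgroup (TensorProduct ℤ M N) :=
  AddSubgroup.closure
    {z | ∃ (a : A) (m : M) (n : N), z = (op a • m) ⊗ₜ[ℤ] n - m ⊗ₜ[ℤ] (a • n)}

/-- The tensor product `M ⊗_A N` of a right `A`-module `M` and a left `A`-module `N`
over a possibly noncommutative ring `A`. -/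
abbrev T := TensorProduct ℤ M N ⧸ rel A M N

noncomputable def tmul (m : M) (n : N) : T A M N := QuotientAddGroup.mk (m ⊗ₜ[ℤ] n)

variable {A M N}

lemma add_tmul (m m' : M) (n : N) :
    tmul A M N (m + m') n = tmul A M N m n + tmul A M N m' n := by
  show QuotientAddGroup.mk _ = _
  rw [TensorProduct.add_tmul, QuotientAddGroup.mk_add]; rfl

lemma tmul_add (m : M) (n n' : N) :
    tmul A M N m (n + n') = tmul A M N m n + tmul A M N m n' := by
  show QuotientAddGroup.mk _ = _
  rw [TensorProduct.tmul_add, QuotientAddGroup.mk_add]; rfl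

lemma zero_tmul (n : N) : tmul A M N 0 n = 0 := by
  show QuotientAddGroup.mk _ = _
  rw [TensorProduct.zero_tmul]; rfl

lemma tmul_zero (m : M) : tmul A M N m 0 = 0 := by
  show QuotientAddGroup.mk _ = _
  rw [TensorProduct.tmul_zero]; rfl

lemma balanced (a : A) (m : M) (n : N) :
    tmul A M N (op a • m) n = tmul A M N m (a • n) := by
  apply QuotientAddGroup.eq.mpr
  have h : (op a • m) ⊗ₜ[ℤ] n - m ⊗ₜ[ℤ] (a • n) ∈ rel A M N :=
    AddSubgroup.subset_closure ⟨a, m, n, rfl⟩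
  have := (rel A M N).neg_mem h
  rw [neg_sub] at this
  rw [neg_add_eq_sub]
  exact this

@[elab_as_elim] lemma induction_on {p : T A M N → Prop} (z : T A M N)
    (zero : p 0) (tm : ∀ m n, p (tmul A M N m n))
    (add : ∀ x y, p x → p y → p (x + y)) : p z := by
  obtain ⟨x, rfl⟩ := QuotientAddGroup.mk_surjective z
  induction x using TensorProduct.induction_on with
  | zero => exact zero
  | tmul m n => exact tm m n
  | add x y hx hy => rw [QuotientAddGroup.mk_add]; exact add _ _ hx hy

noncomputable def lift₂ {P : Type*} [AddCommGroup P] (f : M → N → P)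
    (h₁ : ∀ m m' n, f (m + m') n = f m n + f m' n)
    (h₂ : ∀ m n n', f m (n + n') = f m n + f m n')
    (hb : ∀ (a : A) m n, f (op a • m) n = f m (a • n)) : T A M N →+ P := by
  refine QuotientAddGroup.lift _ (TensorProduct.liftAddHom
    (AddMonoidHom.mk' (fun m => AddMonoidHom.mk' (f m) (h₂ m))
      (fun m m' => by ext n; exact h₁ m m' n)) ?_) ?_
  · intro r m n
    show f (r • m) n = f m (r • n)
    set F : M →+ (N →+ P) := AddMonoidHom.mk' (fun m => AddMonoidHom.mk' (f m) (h₂ m))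
      (fun m m' => by ext n; exact h₁ m m' n) with hF
    calc f (r • m) n = (F (r • m)) n := rfl
      _ = (r • F m) n := by rw [AddMonoidHom.map_zsmul]
      _ = r • f m n := rfl
      _ = f m (r • n) := (AddMonoidHom.map_zsmul (AddMonoidHom.mk' (f m) (h₂ m)) _ _).symm
  · refine (AddSubgroup.closure_le _).2 ?_
    rintro x ⟨a, m, n, rfl⟩
    simp only [SetLike.mem_coe, AddMonoidHom.mem_ker, map_sub,
      TensorProduct.liftAddHom_tmul]
    show f (op a • m) n - f m (a • n) = 0
    rw [hb, sub_self]

@[simp] lemma lift₂_tmul {P : Type*} [AddCommGroup P] (f : M → N → P)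
    (h₁ : ∀ m m' n, f (m + m') n = f m n + f m' n)
    (h₂ : ∀ m n n', f m (n + n') = f m n + f m n')
    (hb : ∀ (a : A) m n, f (op a • m) n = f m (a • n)) (m : M) (n : N) :
    lift₂ f h₁ h₂ hb (tmul A M N m n) = f m n := rfl

lemma hom_ext {P : Type*} [AddCommGroup P] {g h : T A M N →+ P}
    (H : ∀ m n, g (tmul A M N m n) = h (tmul A M N m n)) : g = h := by
  refine AddMonoidHom.ext fun z => ?_
  refine induction_on z (by simp) H fun x y hx hy => by rw [map_add, map_add, hx, hy]

/-- A left module structure on the tensor product induced from a left action on the first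
factor commuting with the right `A`-action. -/
noncomputable instance instLeftModule (S : Type*) [Semiring S] [Module S M]
    [SMulCommClass S Aᵐᵒᵖ M] : Module S (T A M N) where
  smul s z := lift₂ (fun m n => tmul A M N (s • m) n)
    (fun m m' n => by (try dsimp only); rw [smul_add, add_tmul])
    (fun m n n' => by (try dsimp only); rw [tmul_add])
    (fun a m n => by (try dsimp only); rw [smul_comm, balanced]) z
  one_smul z := by
    show lift₂ _ _ _ _ z = z
    refine induction_on z (by simp) (fun m n => by simp [zero_tmul, tmul_zero]) fun x y hx hy => by
      rw [map_add, hx, hy]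
  mul_smul r s z := by
    show lift₂ _ _ _ _ z = lift₂ _ _ _ _ (lift₂ _ _ _ _ z)
    refine induction_on z (by simp) (fun m n => by simp [mul_smul]) fun x y hx hy => by
      simp only [map_add, hx, hy]
  smul_zero s := by show lift₂ _ _ _ _ 0 = 0; simp
  smul_add s x y := by show lift₂ _ _ _ _ (x + y) = _; rw [map_add]; rfl
  add_smul r s z := by
    show lift₂ _ _ _ _ z = lift₂ _ _ _ _ z + lift₂ _ _ _ _ z
    refine induction_on z (by simp) (fun m n => by simp [add_smul, add_tmul]) fun x y hx hy => by
      simp only [map_add, hx, hy]; abel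
  zero_smul z := by
    show lift₂ _ _ _ _ z = 0
    refine induction_on z (by simp) (fun m n => by simp [zero_tmul, tmul_zero]) fun x y hx hy => by
      rw [map_add, hx, hy, add_zero]

lemma smul_tmul' {S : Type*} [Semiring S] [Module S M] [SMulCommClass S Aᵐᵒᵖ M]
    (s : S) (m : M) (n : N) : s • tmul A M N m n = tmul A M N (s • m) n := rfl

/-- A right module structure on the tensor product induced from a right action on the
second factor commuting with the left `A`-action. -/
noncomputable instance instRightModule (S : Type*) [Semiring S] [Module Sᵐᵒᵖ N]
    [SMulCommClass A Sᵐᵒᵖ N] : Module Sᵐᵒᵖ (T A M N) where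
  smul s z := lift₂ (fun m n => tmul A M N m (s • n))
    (fun m m' n => by (try dsimp only); rw [add_tmul])
    (fun m n n' => by (try dsimp only); rw [smul_add, tmul_add])
    (fun a m n => by (try dsimp only); rw [balanced, smul_comm]) z
  one_smul z := by
    show lift₂ _ _ _ _ z = z
    refine induction_on z (by simp) (fun m n => by simp [zero_tmul, tmul_zero]) fun x y hx hy => by
      rw [map_add, hx, hy]
  mul_smul r s z := by
    show lift₂ _ _ _ _ z = lift₂ _ _ _ _ (lift₂ _ _ _ _ z)
    refine induction_on z (by simp) (fun m n => by simp [mul_smul]) fun x y hx hy => by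
      simp only [map_add, hx, hy]
  smul_zero s := by show lift₂ _ _ _ _ 0 = 0; simp
  smul_add s x y := by show lift₂ _ _ _ _ (x + y) = _; rw [map_add]; rfl
  add_smul r s z := by
    show lift₂ _ _ _ _ z = lift₂ _ _ _ _ z + lift₂ _ _ _ _ z
    refine induction_on z (by simp) (fun m n => by simp [add_smul, tmul_add]) fun x y hx hy => by
      simp only [map_add, hx, hy]; abel
  zero_smul z := by
    show lift₂ _ _ _ _ z = 0
    refine induction_on z (by simp) (fun m n => by simp [zero_tmul, tmul_zero]) fun x y hx hy => by
      rw [map_add, hx, hy, add_zero]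

lemma tmul_smul' {S : Type*} [Semiring S] [Module Sᵐᵒᵖ N] [SMulCommClass A Sᵐᵒᵖ N]
    (s : Sᵐᵒᵖ) (m : M) (n : N) : s • tmul A M N m n = tmul A M N m (s • n) := rfl

end NCT

/-- `X` is an `L`-subgenerated right `S`-module: every element of `X` has an annihilator
containing the annihilator of a finite subset of `L`.  (This is the elementwise
characterization of membership in the trace `Sp (σ[L], X)`.) -/
def IsSubgenBy (S : Type*) [Ring S] (L : Type*) [AddCommGroup L] [Module Sᵐᵒᵖ L]
    (X : Type*) [AddCommGroup X] [Module Sᵐᵒᵖ X] : Prop :=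
  ∀ x : X, ∃ W : Finset L, ∀ s : S,
    (∀ w ∈ W, MulOpposite.op s • w = 0) → MulOpposite.op s • x = 0

/-- The elements of `X` that are `L`-subgenerated, i.e. the trace `Sp (σ[L], X)`. -/
def subgenTrace (S : Type*) [Ring S] (L : Type*) [AddCommGroup L] [Module Sᵐᵒᵖ L]
    (X : Type*) [AddCommGroup X] [Module Sᵐᵒᵖ X] : AddSubmonoid X where
  carrier := {x | ∃ W : Finset L, ∀ s : S, (∀ w ∈ W, op s • w = 0) → op s • x = 0}
  zero_mem' := ⟨∅, fun s _ => smul_zero _⟩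
  add_mem' := by
    classical
    rintro x y ⟨Wx, hx⟩ ⟨Wy, hy⟩
    refine ⟨Wx ∪ Wy, fun s hs => ?_⟩
    rw [smul_add, hx s fun w hw => hs w (Finset.mem_union_left _ hw),
      hy s fun w hw => hs w (Finset.mem_union_right _ hw), add_zero]

theorem isSubgenBy_of_subgenTrace_eq_top {S : Type*} [Ring S] {L : Type*} [AddCommGroup L]
    [Module Sᵐᵒᵖ L] {X : Type*} [AddCommGroup X] [Module Sᵐᵒᵖ X]
    (h : subgenTrace S L X = ⊤) : IsSubgenBy S L X :=
  fun x => (h ▸ AddSubmonoid.mem_top x : x ∈ subgenTrace S L X)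

theorem NCT.addSubmonoid_eq_top_of_tmul_mem {A : Type*} [Ring A] {M : Type*} [AddCommGroup M]
    [Module Aᵐᵒᵖ M] {N : Type*} [AddCommGroup N] [Module A N] {P : AddSubmonoid (NCT.T A M N)}
    (h : ∀ m n, NCT.tmul A M N m n ∈ P) : P = ⊤ :=
  eq_top_iff.2 fun z _ => NCT.induction_on z P.zero_mem h fun _ _ => P.add_mem

theorem smul_eq_zero_of_map_smul_eq_zero {S T K L : Type*} [AddCommGroup K] [SMul Tᵐᵒᵖ K]
    [AddCommGroup L] [SMul Sᵐᵒᵖ L]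
    {ξ : S → T} {θ : K →+ L} (hinj : Function.Injective θ)
    (hcomp : ∀ (s : S) (k : K), θ (op (ξ s) • k) = op s • θ k) {k : K} {s : S}
    (h : op s • θ k = 0) : op (ξ s) • k = 0 :=
  hinj (by rw [hcomp, h, map_zero])

open MulOpposite NCT in
theorem statement2_general
    (A : Type*) [Ring A]
    (B : Type*) [Ring B]
    (T : Type*) [Ring T]
    (S : Type*) [Ring S]
    (ξ : S →+* T)
    (K : Type*) [AddCommGroup K] [Module Tᵐᵒᵖ K]
    [Module Aᵐᵒᵖ K]
    (L : Type*) [AddCommGroup L] [Module Sᵐᵒᵖ L]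
    [Module A B]
    (θ : K →+ L)
    [Module Sᵐᵒᵖ (NCT.T A K B)]
    (hact : ∀ (s : S) (k : K) (b : B),
      op s • NCT.tmul A K B k b = NCT.tmul A K B (op (ξ s) • k) b)
    -- `θ` is injective and compatible with the actions
    (hinj : Function.Injective θ)
    (hcomp : ∀ (s : S) (k : K), θ (op (ξ s) • k) = op s • θ k) :
    (∀ (k : K) (s : S), op s • θ k = 0 → op (ξ s) • k = 0) ∧
      IsSubgenBy S L (NCT.T A K B) := by
  have ann_le : ∀ (k : K) (s : S), op s • θ k = 0 → op (ξ s) • k = 0 :=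
    fun _ _ => smul_eq_zero_of_map_smul_eq_zero hinj hcomp
  refine ⟨ann_le, isSubgenBy_of_subgenTrace_eq_top <|
    addSubmonoid_eq_top_of_tmul_mem fun k b => ?_⟩
  refine ⟨{θ k}, fun s hs => ?_⟩
  rw [hact, ann_le k s (hs _ (Finset.mem_singleton_self _)), zero_tmul]

open MulOpposite NCT in
/-- Let `ξ : S → T` be a morphism of `A`-rings (`T` an `A`-ring, `S` a `B`-ring), `K` a
right `T`-module, `L` a right `S`-module and `θ : K → L` a right `A`-linear map.  If `θ` is
injective and `θ(k ↼ ξ(s)) = θ(k) ↼ s` for all `s ∈ S`, `k ∈ K`, then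
`ξ((0_L : θ(k))) ⊆ (0_K : k)` for every `k ∈ K`, and consequently the induced right
`S`-module `K ⊗_A B` (with `S`-action `(k ⊗ b) ↼ s = k ξ(s) ⊗ b`) is `L`-subgenerated. -/
theorem statement2
    (R : Type*) [CommRing R] (A : Type*) [Ring A] [Algebra R A]
    (B : Type*) [Ring B] [Algebra R B] (β : A →ₐ[R] B)
    (T : Type*) [Ring T] (ηT : A →+* T)
    (S : Type*) [Ring S] (ηS : B →+* S)
    (ξ : S →+* T) (hξ : ∀ a : A, ξ (ηS (β a)) = ηT a)
    (K : Type*) [AddCommGroup K] [Module Tᵐᵒᵖ K]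
    [Module Aᵐᵒᵖ K] (hKA : ∀ (a : A) (k : K), op a • k = op (ηT a) • k)
    (L : Type*) [AddCommGroup L] [Module Sᵐᵒᵖ L]
    [Module A B] (hAB : ∀ (a : A) (b : B), a • b = β a * b)
    (θ : K →+ L) (hθ : ∀ (a : A) (k : K), θ (op a • k) = op (ηS (β a)) • θ k)
    [Module Sᵐᵒᵖ (NCT.T A K B)]
    (hact : ∀ (s : S) (k : K) (b : B),
      op s • NCT.tmul A K B k b = NCT.tmul A K B (op (ξ s) • k) b)
    -- `θ` is injective and compatible with the actions
    (hinj : Function.Injective θ)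
    (hcomp : ∀ (s : S) (k : K), θ (op (ξ s) • k) = op s • θ k) :
    (∀ (k : K) (s : S), op s • θ k = 0 → op (ξ s) • k = 0) ∧
      IsSubgenBy S L (NCT.T A K B) :=
  statement2_general A B T S ξ K L θ hact hinj hcomp
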